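/- Let T be a power partial isometry on a Hilbert space H and p ≥ 2. Then the subspace H_p = ⊕_{n=1}^p (T^{n−1}T*^{n−1} − T^n T*^n)(T*^{p−n}T^{p−n} − T*^{p−n+1}T^{p−n+1})H is reducing for T, and T restricted to H_p is unitarily equivalent to J_p ⊗ 1 on ℂ^p ⊗ M_p, where J_p is the truncated shift on ℂ^p (J_p e_n = e_{n+1} for n < p, J_p e_p = 0) and M_p = (1−TT*)(T*^{p−1}T^{p−1} − T*^p T^p)H. -/

import Mathlib

/-!
Write `Eₙ = TⁿT*ⁿ` (`rangeProj T n`) and `Fₙ = T*ⁿTⁿ`, which is `Eₙ` for `T*`. For a power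
partial isometry these are decreasing sequences of projections, and each `Eₘ` commutes with each
`Fₙ` because `FₙEₘ` is idempotent. Hence the operators
`Q(a, b) = (Eₐ - Eₐ₊₁)(F_b - F_{b+1})` (`levelProj T a b`) are mutually orthogonal projections
with `T Q(a, b + 1) = Q(a + 1, b) T`, `T Q(a, 0) = 0` and `T* Q(0, b) = 0`. The `n`-th summand
of `H_p` is the range of `Q(n - 1, p - n)`, so `H_p` reduces `T`, and `T*ⁱ` maps the
`(i + 1)`-st summand isometrically onto `M_p = range Q(0, p - 1)`. Thus
`x ↦ (T*ⁱ Q(i, p - 1 - i) x)ᵢ` (coordinates `shiftCoord T p i`) is the unitary; its inverse is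
`f ↦ ∑ᵢ Tⁱ fᵢ`.
-/

open ContinuousLinearMap

theorem IsStarProjection.commute_of_isIdempotentElem_mul {A : Type*} [NonUnitalNormedRing A]
    [StarRing A] [CStarRing A] {P Q : A} (hP : IsStarProjection P) (hQ : IsStarProjection Q)
    (hPQ : IsIdempotentElem (P * Q)) : Commute P Q := by
  have hPs : star P = P := hP.isSelfAdjoint
  have hQs : star Q = Q := hQ.isSelfAdjoint
  have hPP (x : A) : P * (P * x) = P * x := by rw [← mul_assoc, hP.isIdempotentElem.eq]
  have hQQ (x : A) : Q * (Q * x) = Q * x := by rw [← mul_assoc, hQ.isIdempotentElem.eq]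
  have hPQPQ (x : A) : P * (Q * (P * (Q * x))) = P * (Q * x) := by
    simpa only [mul_assoc] using congrArg (· * x) hPQ.eq
  -- `X = PQ - PQP` has `X X⋆ = PQP - PQPQP = 0`
  have hPQP : P * Q * P = P * Q := by
    rw [eq_comm, ← sub_eq_zero, ← CStarRing.mul_star_self_eq_zero_iff]
    simp only [star_sub, star_mul, hPs, hQs, sub_mul, mul_sub, mul_assoc, hPP, hQQ, hPQPQ]
    abel
  calc P * Q = P * Q * P := hPQP.symm
    _ = Q * P := by simpa [star_mul, hPs, hQs, mul_assoc] using congrArg star hPQP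

lemma iSup_mem_Icc_one_eq_iSup_fin {α : Type*} [CompleteLattice α] (f : ℕ → α) (p : ℕ) :
    ⨆ n ∈ Finset.Icc 1 p, f n = ⨆ i : Fin p, f (i + 1) := by
  refine le_antisymm (iSup₂_le fun n hn => ?_) (iSup_le fun i => le_iSup₂_of_le (i + 1 : ℕ)
    (Finset.mem_Icc.mpr ⟨Nat.le_add_left 1 i, i.2⟩) le_rfl)
  obtain ⟨h1, h2⟩ := Finset.mem_Icc.mp hn
  exact le_iSup_of_le ⟨n - 1, by omega⟩ (by simp [Nat.sub_add_cancel h1])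

section

variable {R M ι : Type*} [Semiring R] [AddCommMonoid M] [Module R M]

lemma Submodule.iSup_range_le_comap (T : M →ₗ[R] M) (Q : ι → M →ₗ[R] M)
    (h : ∀ i y, T (Q i y) ∈ ⨆ j, LinearMap.range (Q j)) :
    ⨆ j, LinearMap.range (Q j) ≤ (⨆ j, LinearMap.range (Q j)).comap T :=
  iSup_le fun i => by
    rintro _ ⟨y, rfl⟩
    exact h i y

lemma sum_apply_eq_self_of_mem_iSup_range [Fintype ι] (Q : ι → M →ₗ[R] M)
    (hidem : ∀ i y, Q i (Q i y) = Q i y) (horth : ∀ i j, i ≠ j → ∀ y, Q i (Q j y) = 0)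
    {x : M} (hx : x ∈ ⨆ i, LinearMap.range (Q i)) : ∑ i, Q i x = x := by
  suffices ⨆ i, LinearMap.range (Q i) ≤ LinearMap.eqLocus (∑ i, Q i) LinearMap.id by
    simpa using this hx
  refine iSup_le fun j => ?_
  rintro _ ⟨y, rfl⟩
  rw [LinearMap.mem_eqLocus, LinearMap.sum_apply, Finset.sum_eq_single j
    (fun i _ hij => horth i j hij y) (by simp), hidem, LinearMap.id_apply]

end

theorem exists_linearIsometryEquiv_piLp_of_adjoint {𝕜 H ι : Type*} [RCLike 𝕜]
    [NormedAddCommGroup H] [InnerProductSpace 𝕜 H] [CompleteSpace H] [Fintype ι]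
    {K M : Submodule 𝕜 H} (W : ι → H →L[𝕜] H)
    (hM : ∀ i x, W i x ∈ M) (hK : ∀ i x, adjoint (W i) x ∈ K)
    (hself : ∀ i, ∀ m ∈ M, W i (adjoint (W i) m) = m)
    (hne : ∀ i j, i ≠ j → ∀ m, W i (adjoint (W j) m) = 0)
    (hsum : ∀ x ∈ K, ∑ i, adjoint (W i) (W i x) = x) :
    ∃ U : K ≃ₗᵢ[𝕜] PiLp 2 (fun _ : ι => M), ∀ x i, (U x i : H) = W i x := by
  let U : K →ₗ[𝕜] PiLp 2 (fun _ : ι => M) :=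
    (WithLp.linearEquiv 2 𝕜 (ι → M)).symm.toLinearMap ∘ₗ
      LinearMap.pi fun i => ((W i : H →ₗ[𝕜] H).codRestrict M (hM i)) ∘ₗ K.subtype
  have hU : ∀ x i, (U x i : H) = W i x := fun _ _ => rfl
  have hinner : ∀ x y : K, inner 𝕜 (U x) (U y) = inner 𝕜 x y := by
    intro x y
    simp only [PiLp.inner_apply, Submodule.coe_inner, hU, ← adjoint_inner_right]
    rw [← inner_sum, hsum y y.2]
  have hsurj : Function.Surjective (U.isometryOfInner hinner) := by
    intro f
    refine ⟨⟨∑ j, adjoint (W j) (f j), Submodule.sum_mem _ fun j _ => hK j _⟩,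
      PiLp.ext fun i => Subtype.ext ?_⟩
    change W i (∑ j, adjoint (W j) (f j)) = f i
    rw [map_sum, Finset.sum_eq_single i (fun j _ hji => hne i j hji.symm _) (by simp),
      hself i _ (f i).2]
  exact ⟨.ofSurjective _ hsurj, hU⟩

def IsPowerPartialIsometry {R : Type*} [Monoid R] [Star R] (t : R) : Prop :=
  ∀ n : ℕ, t ^ n * star t ^ n * t ^ n = t ^ n

namespace PowerPartialIsometry

variable {R : Type*} [Ring R] [StarRing R]

def rangeProj (t : R) (n : ℕ) : R := t ^ n * star t ^ n

def gapProj (t : R) (n : ℕ) : R := rangeProj t n - rangeProj t (n + 1)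

def levelProj (t : R) (a b : ℕ) : R := gapProj t a * gapProj (star t) b

def shiftCoord (t : R) (p i : ℕ) : R := star t ^ i * levelProj t i (p - (i + 1))

lemma isSelfAdjoint_rangeProj (t : R) (n : ℕ) : IsSelfAdjoint (rangeProj t n) := by
  simp [IsSelfAdjoint, rangeProj, star_pow]

lemma rangeProj_succ_mul (t : R) (n : ℕ) :
    rangeProj t (n + 1) * t = t * rangeProj t n * rangeProj (star t) 1 := by
  simp only [rangeProj, pow_one, star_star]
  rw [pow_succ' t n, pow_succ (star t) n]
  simp only [mul_assoc]

lemma mul_rangeProj_star_succ (t : R) (n : ℕ) :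
    t * rangeProj (star t) (n + 1) = rangeProj t 1 * rangeProj (star t) n * t := by
  simp only [rangeProj, pow_one, star_star]
  rw [pow_succ' (star t) n, pow_succ t n]
  simp only [mul_assoc]

lemma gapProj_zero (t : R) : gapProj t 0 = 1 - t * star t := by
  simp [gapProj, rangeProj]

end PowerPartialIsometry

open PowerPartialIsometry

namespace IsPowerPartialIsometry

variable {R : Type*} [Ring R] [StarRing R] {t : R} (ht : IsPowerPartialIsometry t)
include ht

protected lemma star : IsPowerPartialIsometry (star t) := fun n => by
  simpa [star_pow, mul_assoc] using congrArg star (ht n)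

lemma rangeProj_mul_rangeProj_of_le {m n : ℕ} (h : m ≤ n) :
    rangeProj t m * rangeProj t n = rangeProj t n := by
  obtain ⟨k, rfl⟩ := Nat.exists_eq_add_of_le h
  simp only [rangeProj, pow_add, ← mul_assoc, ht m]

lemma rangeProj_mul_rangeProj_of_ge {m n : ℕ} (h : m ≤ n) :
    rangeProj t n * rangeProj t m = rangeProj t n := by
  simpa [(isSelfAdjoint_rangeProj t _).star_eq] using
    congrArg star (ht.rangeProj_mul_rangeProj_of_le h)

lemma isStarProjection_rangeProj (n : ℕ) : IsStarProjection (rangeProj t n) :=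
  ⟨ht.rangeProj_mul_rangeProj_of_le le_rfl, isSelfAdjoint_rangeProj t n⟩

lemma isStarProjection_gapProj (n : ℕ) : IsStarProjection (gapProj t n) :=
  (ht.isStarProjection_rangeProj (n + 1)).sub_of_mul_eq_left (ht.isStarProjection_rangeProj n)
    (ht.rangeProj_mul_rangeProj_of_ge n.le_succ)

lemma rangeProj_mul_gapProj {k n : ℕ} (h : k ≤ n) : rangeProj t k * gapProj t n = gapProj t n := by
  rw [gapProj, mul_sub, ht.rangeProj_mul_rangeProj_of_le h,
    ht.rangeProj_mul_rangeProj_of_le (h.trans n.le_succ)]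

lemma gapProj_mul_rangeProj {k n : ℕ} (h : k ≤ n) : gapProj t n * rangeProj t k = gapProj t n := by
  rw [gapProj, sub_mul, ht.rangeProj_mul_rangeProj_of_ge h,
    ht.rangeProj_mul_rangeProj_of_ge (h.trans n.le_succ)]

lemma gapProj_mul_gapProj_of_ne {m n : ℕ} (h : m ≠ n) : gapProj t m * gapProj t n = 0 := by
  rcases h.lt_or_gt with h | h
  · rw [gapProj, sub_mul, ht.rangeProj_mul_gapProj h.le, ht.rangeProj_mul_gapProj h, sub_self]
  · rw [gapProj.eq_1 t n, mul_sub, ht.gapProj_mul_rangeProj h.le, ht.gapProj_mul_rangeProj h,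
      sub_self]

lemma rangeProj_mul_levelProj {k a : ℕ} (b : ℕ) (h : k ≤ a) :
    rangeProj t k * levelProj t a b = levelProj t a b := by
  rw [levelProj, ← mul_assoc, ht.rangeProj_mul_gapProj h]

lemma mul_levelProj_succ (a b : ℕ) : t * levelProj t a (b + 1) = levelProj t (a + 1) b * t := by
  have hsrc : rangeProj (star t) 1 * gapProj (star t) (b + 1) = gapProj (star t) (b + 1) :=
    ht.star.rangeProj_mul_gapProj (Nat.le_add_left 1 b)
  have hleft : t * gapProj t a * rangeProj (star t) 1 = gapProj t (a + 1) * t := by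
    rw [gapProj, gapProj, mul_sub, sub_mul, sub_mul, rangeProj_succ_mul, rangeProj_succ_mul]
  have hright : t * gapProj (star t) (b + 1) = rangeProj t 1 * gapProj (star t) b * t := by
    rw [gapProj, gapProj, mul_sub, mul_sub, sub_mul, mul_rangeProj_star_succ,
      mul_rangeProj_star_succ]
  calc t * levelProj t a (b + 1)
      = t * gapProj t a * rangeProj (star t) 1 * gapProj (star t) (b + 1) := by
        rw [levelProj, mul_assoc (t * _), hsrc, mul_assoc]
    _ = gapProj t (a + 1) * rangeProj t 1 * gapProj (star t) b * t := by
        rw [hleft, mul_assoc, hright, ← mul_assoc, ← mul_assoc]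
    _ = levelProj t (a + 1) b * t := by
        rw [ht.gapProj_mul_rangeProj (Nat.le_add_left 1 a), levelProj]

lemma star_mul_levelProj_zero (b : ℕ) : star t * levelProj t 0 b = 0 := by
  have h1 : star t * t * star t = star t := by simpa using ht.star 1
  rw [levelProj, gapProj_zero, ← mul_assoc, mul_sub, mul_one, ← mul_assoc, h1, sub_self, zero_mul]

end IsPowerPartialIsometry

namespace IsPowerPartialIsometry

variable {A : Type*} [NormedRing A] [StarRing A] [CStarRing A] {t : A}
  (ht : IsPowerPartialIsometry t)
include ht

lemma commute_rangeProj_rangeProj_star (m n : ℕ) :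
    Commute (rangeProj t m) (rangeProj (star t) n) := by
  refine ((ht.star.isStarProjection_rangeProj n).commute_of_isIdempotentElem_mul
    (ht.isStarProjection_rangeProj m) ?_).symm
  calc rangeProj (star t) n * rangeProj t m * (rangeProj (star t) n * rangeProj t m)
      = star t ^ n * ((t ^ n * t ^ m) * (star t ^ m * star t ^ n) * (t ^ n * t ^ m)) *
          star t ^ m := by
        simp only [rangeProj, star_star, mul_assoc]
    _ = star t ^ n * (t ^ n * t ^ m) * star t ^ m := by
        rw [← pow_add, ← pow_add, add_comm m n, ht]
    _ = rangeProj (star t) n * rangeProj t m := by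
        simp only [rangeProj, star_star, mul_assoc]

lemma commute_gapProj_gapProj_star (a b : ℕ) : Commute (gapProj t a) (gapProj (star t) b) := by
  simp only [gapProj]
  exact ((ht.commute_rangeProj_rangeProj_star _ _).sub_right
    (ht.commute_rangeProj_rangeProj_star _ _)).sub_left
    ((ht.commute_rangeProj_rangeProj_star _ _).sub_right (ht.commute_rangeProj_rangeProj_star _ _))

lemma levelProj_star (a b : ℕ) : levelProj (star t) b a = levelProj t a b := by
  rw [levelProj, levelProj, star_star, ht.commute_gapProj_gapProj_star a b]

lemma isStarProjection_levelProj (a b : ℕ) : IsStarProjection (levelProj t a b) :=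
  (ht.isStarProjection_gapProj a).mul (ht.star.isStarProjection_gapProj b)
    (ht.commute_gapProj_gapProj_star a b)

lemma levelProj_mul_levelProj_of_ne {a a' : ℕ} (b b' : ℕ) (h : a ≠ a') :
    levelProj t a b * levelProj t a' b' = 0 := by
  rw [levelProj, levelProj, mul_assoc, ← mul_assoc (gapProj (star t) b),
    ← ht.commute_gapProj_gapProj_star, ← mul_assoc, ← mul_assoc, ht.gapProj_mul_gapProj_of_ne h,
    zero_mul, zero_mul]

lemma star_mul_levelProj_succ (a b : ℕ) :
    star t * levelProj t (a + 1) b = levelProj t a (b + 1) * star t := by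
  simpa only [ht.levelProj_star] using ht.star.mul_levelProj_succ b a

lemma mul_levelProj_zero (a : ℕ) : t * levelProj t a 0 = 0 := by
  simpa only [star_star, ht.levelProj_star] using ht.star.star_mul_levelProj_zero a

lemma levelProj_zero_mul (b : ℕ) : levelProj t 0 b * t = 0 := by
  simpa [star_mul, (ht.isStarProjection_levelProj 0 b).isSelfAdjoint.star_eq] using
    congrArg star (ht.star_mul_levelProj_zero b)

lemma rangeProj_star_mul_levelProj {k b : ℕ} (a : ℕ) (h : k ≤ b) :
    rangeProj (star t) k * levelProj t a b = levelProj t a b := by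
  simpa only [ht.levelProj_star] using ht.star.rangeProj_mul_levelProj a h

lemma star_pow_mul_levelProj (a b : ℕ) :
    star t ^ a * levelProj t a b = levelProj t 0 (a + b) * star t ^ a := by
  induction a generalizing b with
  | zero => simp
  | succ a ih =>
    rw [pow_succ, mul_assoc, ht.star_mul_levelProj_succ, ← mul_assoc, ih, mul_assoc, ← pow_succ,
      Nat.add_right_comm, add_assoc]

lemma levelProj_mul_pow (a b : ℕ) : levelProj t a b * t ^ a = t ^ a * levelProj t 0 (a + b) := by
  simpa [star_mul, star_pow, (ht.isStarProjection_levelProj _ _).isSelfAdjoint.star_eq] using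
    congrArg star (ht.star_pow_mul_levelProj a b)

lemma shiftCoord_eq {p i : ℕ} (hi : i < p) :
    shiftCoord t p i = levelProj t 0 (p - 1) * star t ^ i := by
  rw [shiftCoord, ht.star_pow_mul_levelProj]
  congr 3
  omega

lemma star_shiftCoord (p i : ℕ) :
    star (shiftCoord t p i) = levelProj t i (p - (i + 1)) * t ^ i := by
  rw [shiftCoord, star_mul, (ht.isStarProjection_levelProj _ _).isSelfAdjoint.star_eq, star_pow,
    star_star]

lemma star_shiftCoord_mul_self (p i : ℕ) :
    star (shiftCoord t p i) * shiftCoord t p i = levelProj t i (p - (i + 1)) := by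
  have hQ := ht.isStarProjection_levelProj i (p - (i + 1))
  rw [ht.star_shiftCoord, shiftCoord, mul_assoc, ← mul_assoc (t ^ i), ← rangeProj,
    ht.rangeProj_mul_levelProj _ le_rfl, hQ.isIdempotentElem.eq]

lemma shiftCoord_mul_star_self {p i : ℕ} (hi : i < p) :
    shiftCoord t p i * star (shiftCoord t p i) = levelProj t 0 (p - 1) := by
  have hQ := ht.isStarProjection_levelProj i (p - (i + 1))
  have hsrc : star t ^ i * t ^ i = rangeProj (star t) i := by rw [rangeProj, star_star]
  rw [ht.star_shiftCoord, shiftCoord, mul_assoc, ← mul_assoc (levelProj t _ _),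
    hQ.isIdempotentElem.eq, ht.levelProj_mul_pow, ← mul_assoc, hsrc,
    show i + (p - (i + 1)) = p - 1 by omega]
  exact ht.rangeProj_star_mul_levelProj 0 (by omega)

lemma shiftCoord_mul_star_of_ne (p : ℕ) {i j : ℕ} (h : i ≠ j) :
    shiftCoord t p i * star (shiftCoord t p j) = 0 := by
  rw [ht.star_shiftCoord, shiftCoord, mul_assoc, ← mul_assoc (levelProj t _ _),
    ht.levelProj_mul_levelProj_of_ne _ _ h, zero_mul, mul_zero]

lemma shiftCoord_succ_mul {p i : ℕ} (h : i + 1 < p) :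
    shiftCoord t p (i + 1) * t = shiftCoord t p i := by
  obtain ⟨b, hb⟩ : ∃ b, p - (i + 1) = b + 1 := ⟨p - (i + 2), by omega⟩
  have hb' : p - (i + 1 + 1) = b := by omega
  rw [shiftCoord, shiftCoord, hb, hb', mul_assoc, ← ht.mul_levelProj_succ, pow_succ, mul_assoc,
    ← mul_assoc (star t), show star t * t = rangeProj (star t) 1 by simp [rangeProj],
    ht.rangeProj_star_mul_levelProj i (Nat.le_add_left 1 b)]

lemma shiftCoord_zero_mul (p : ℕ) : shiftCoord t p 0 * t = 0 := by
  rw [shiftCoord, pow_zero, one_mul, ht.levelProj_zero_mul]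

end IsPowerPartialIsometry

namespace PowerPartialIsometry

variable {𝕜 H : Type*} [RCLike 𝕜] [NormedAddCommGroup H] [InnerProductSpace 𝕜 H] [CompleteSpace H]

noncomputable def truncatedShiftPart (T : H →L[𝕜] H) (p : ℕ) : Submodule 𝕜 H :=
  ⨆ i : Fin p, LinearMap.range (levelProj T i (p - (i + 1))).toLinearMap

lemma levelProj_apply_mem_truncatedShiftPart (T : H →L[𝕜] H) {p i : ℕ} (hi : i < p) (y : H) :
    levelProj T i (p - (i + 1)) y ∈ truncatedShiftPart T p :=
  Submodule.mem_iSup_of_mem (⟨i, hi⟩ : Fin p) ⟨y, rfl⟩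

end PowerPartialIsometry

namespace IsPowerPartialIsometry

variable {𝕜 H : Type*} [RCLike 𝕜] [NormedAddCommGroup H] [InnerProductSpace 𝕜 H] [CompleteSpace H]
  {T : H →L[𝕜] H} (ht : IsPowerPartialIsometry T)
include ht

lemma apply_mem_truncatedShiftPart {p : ℕ} {x : H} (hx : x ∈ truncatedShiftPart T p) :
    T x ∈ truncatedShiftPart T p := by
  refine Submodule.iSup_range_le_comap T.toLinearMap _ (fun i y => ?_) hx
  simp only [ContinuousLinearMap.coe_coe]
  rw [← mul_apply_eq_comp]
  rcases Nat.lt_or_ge (i + 1) p with h | h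
  · rw [show p - (i + 1) = p - (i + 1 + 1) + 1 by omega, ht.mul_levelProj_succ, mul_apply_eq_comp]
    exact levelProj_apply_mem_truncatedShiftPart T h _
  · rw [show p - (i + 1) = 0 by omega, ht.mul_levelProj_zero, zero_apply]
    exact zero_mem _

lemma adjoint_apply_mem_truncatedShiftPart {p : ℕ} {x : H} (hx : x ∈ truncatedShiftPart T p) :
    adjoint T x ∈ truncatedShiftPart T p := by
  refine Submodule.iSup_range_le_comap (adjoint T).toLinearMap _ (fun i y => ?_) hx
  simp only [ContinuousLinearMap.coe_coe]
  rw [← mul_apply_eq_comp, ← star_eq_adjoint]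
  obtain ⟨_ | i, hi⟩ := i
  · rw [Fin.val_mk, ht.star_mul_levelProj_zero, zero_apply]
    exact zero_mem _
  · rw [Fin.val_mk, ht.star_mul_levelProj_succ, mul_apply_eq_comp,
      show p - (i + 1 + 1) + 1 = p - (i + 1) by omega]
    exact levelProj_apply_mem_truncatedShiftPart T (by omega) _

lemma sum_levelProj_apply_of_mem {p : ℕ} {x : H} (hx : x ∈ truncatedShiftPart T p) :
    ∑ i : Fin p, levelProj T i (p - (i + 1)) x = x := by
  refine sum_apply_eq_self_of_mem_iSup_range
    (fun i : Fin p => (levelProj T i (p - (i + 1))).toLinearMap)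
    (fun i y => ?_) (fun i j hij y => ?_) hx
  · rw [ContinuousLinearMap.coe_coe, ← mul_apply_eq_comp,
      (ht.isStarProjection_levelProj _ _).isIdempotentElem.eq]
  · rw [ContinuousLinearMap.coe_coe, ContinuousLinearMap.coe_coe, ← mul_apply_eq_comp,
      ht.levelProj_mul_levelProj_of_ne _ _ (Fin.val_ne_of_ne hij), zero_apply]

theorem exists_linearIsometryEquiv_truncatedShiftPart (p : ℕ) :
    ∃ U : truncatedShiftPart T p ≃ₗᵢ[𝕜]
        PiLp 2 (fun _ : Fin p => LinearMap.range (levelProj T 0 (p - 1)).toLinearMap),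
      ∀ x i, (U x i : H) = shiftCoord T p i x := by
  have hQ := ht.isStarProjection_levelProj 0 (p - 1)
  refine exists_linearIsometryEquiv_piLp_of_adjoint (fun i : Fin p => shiftCoord T p i)
    (fun i x => ?_) (fun i x => ?_) (fun i m hm => ?_) (fun i j hij m => ?_) (fun x hx => ?_)
  · rw [ht.shiftCoord_eq i.2, mul_apply_eq_comp]
    exact ⟨_, rfl⟩
  · rw [← star_eq_adjoint, ht.star_shiftCoord, mul_apply_eq_comp]
    exact levelProj_apply_mem_truncatedShiftPart T i.2 _
  · obtain ⟨y, rfl⟩ := hm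
    rw [← star_eq_adjoint, ← mul_apply_eq_comp, ht.shiftCoord_mul_star_self i.2, coe_coe,
      ← mul_apply_eq_comp, hQ.isIdempotentElem.eq]
  · rw [← star_eq_adjoint, ← mul_apply_eq_comp,
      ht.shiftCoord_mul_star_of_ne p (Fin.val_ne_of_ne hij), zero_apply]
  · simp only [← star_eq_adjoint, ← mul_apply_eq_comp, ht.star_shiftCoord_mul_self]
    exact ht.sum_levelProj_apply_of_mem hx

end IsPowerPartialIsometry

open PowerPartialIsometry

/-- For a power partial isometry `T` and `p ≥ 2`, the subspace
`H_p = ⊕_{n=1}^p (T^{n−1}T*^{n−1} − T^n T*^n)(T*^{p−n}T^{p−n} − T*^{p−n+1}T^{p−n+1})H`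
is reducing for `T`, and `T` restricted to `H_p` is unitarily equivalent to
`J_p ⊗ 1` on `ℂ^p ⊗ M_p`, where `J_p` is the truncated shift and
`M_p = (1−TT*)(T*^{p−1}T^{p−1} − T*^p T^p)H`.  Here `ℂ^p ⊗ M_p` is realised as the
`ℓ²`-product `PiLp 2 (fun _ : Fin p => M_p)` and `J_p ⊗ 1` as the truncated shift
`(J_p ⊗ 1)f(0) = 0`, `(J_p ⊗ 1)f(i+1) = f(i)`. -/
theorem restriction_unitarily_equivalent_truncated_shift
    {H : Type*} [NormedAddCommGroup H] [InnerProductSpace ℂ H] [CompleteSpace H]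
    (T : H →L[ℂ] H)
    (hT : ∀ n : ℕ, T ^ n * (adjoint T) ^ n * T ^ n = T ^ n)
    (p : ℕ) (hp : 2 ≤ p)
    (Hp : Submodule ℂ H)
    (hHp : Hp = ⨆ n ∈ Finset.Icc 1 p, LinearMap.range (ContinuousLinearMap.toLinearMap
      ((T ^ (n - 1) * (adjoint T) ^ (n - 1) - T ^ n * (adjoint T) ^ n) *
        ((adjoint T) ^ (p - n) * T ^ (p - n)
          - (adjoint T) ^ (p - n + 1) * T ^ (p - n + 1)))))
    (Mp : Submodule ℂ H)
    (hMp : Mp = LinearMap.range (ContinuousLinearMap.toLinearMap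
      ((1 - T * adjoint T) *
        ((adjoint T) ^ (p - 1) * T ^ (p - 1) - (adjoint T) ^ p * T ^ p)))) :
    (∀ x ∈ Hp, adjoint T x ∈ Hp) ∧
    ∃ hinv : ∀ x ∈ Hp, T x ∈ Hp,
      ∃ U : Hp ≃ₗᵢ[ℂ] PiLp 2 (fun _ : Fin p => Mp),
        ∀ x : Hp,
          U ⟨T x, hinv x x.2⟩ ⟨0, by omega⟩ = 0 ∧
          ∀ i : Fin p, ∀ h : i.val + 1 < p,
            U ⟨T x, hinv x x.2⟩ ⟨i.val + 1, h⟩ = U x i := by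
  have ht : IsPowerPartialIsometry T := by
    simpa only [IsPowerPartialIsometry, star_eq_adjoint] using hT
  have hHp' : Hp = truncatedShiftPart T p := by
    rw [hHp, iSup_mem_Icc_one_eq_iSup_fin, truncatedShiftPart]
    simp [levelProj, gapProj, rangeProj, star_eq_adjoint]
  have hMp' : Mp = LinearMap.range (levelProj T 0 (p - 1)).toLinearMap := by
    rw [hMp]
    simp [levelProj, gapProj, rangeProj, star_eq_adjoint, Nat.sub_add_cancel (by omega : 1 ≤ p)]
  subst hHp' hMp'
  obtain ⟨U, hU⟩ := ht.exists_linearIsometryEquiv_truncatedShiftPart p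
  refine ⟨fun _ => ht.adjoint_apply_mem_truncatedShiftPart,
    fun _ => ht.apply_mem_truncatedShiftPart, U, fun x => ⟨?_, fun i hi => ?_⟩⟩
  · ext1
    rw [hU, ← mul_apply_eq_comp, ht.shiftCoord_zero_mul]
    rfl
  · ext1
    rw [hU, hU, ← mul_apply_eq_comp, ht.shiftCoord_succ_mul hi]
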